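/- arXiv:0903.2265 — 2 statements merged into one kernel-verified Lean document; each statement's English description precedes it below -/
import Mathlib

section
/- Let g : (0, 1/2] → ℝ be nonincreasing (interpreted as the width profile of a stack of wide items ordered by nonincreasing width, where g(x) is the width of the stack at height x), with g(x) > 1/2 for all x ≤ h, where h ≤ 1/2 is the total stack height. If for every δ ∈ (ε, 1/2] the measure of {x ∈ (0, h] : g(x) > 1 - δ} exceeds (δ - ε)/(1 + 2δ), then ∫_0^h g(x) dx ≥ ∫_ε^{1/2} (x - ε)/(1 + 2x) dx + h/2. -/
open MeasureTheory Set

theorem stmt5 (ε h : ℝ) (g : ℝ → ℝ)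
    (hε : 0 < ε) (hε2 : ε ≤ 1/200)
    (hh : 0 < h) (hh2 : h ≤ 1/2)
    (hmono : AntitoneOn g (Set.Ioc 0 h))
    (hmeas : Measurable g)
    (hbound : ∀ x ∈ Set.Ioc 0 h, 1/2 < g x ∧ g x ≤ 1)
    (hlevel : ∀ δ : ℝ, ε < δ → δ ≤ 1/2 →
      ENNReal.ofReal ((δ - ε)/(1 + 2*δ)) <
        MeasureTheory.volume {x ∈ Set.Ioc 0 h | 1 - δ < g x}) :
    (∫ x in (0:ℝ)..h, g x) ≥ (∫ x in ε..(1/2 : ℝ), (x - ε)/(1 + 2*x)) + h/2 := by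
  set c : ℝ := 1/2 - ε with hc
  have hc0 : 0 < c := by simp only [hc]; linarith
  have hc2 : c < 1/2 := by simp only [hc]; linarith
  set μ := volume.restrict (Set.Ioc (0:ℝ) h) with hμ
  have hIoc : MeasurableSet (Set.Ioc (0:ℝ) h) := measurableSet_Ioc
  -- integrability of g on Ioc 0 h
  have hint : IntegrableOn g (Set.Ioc 0 h) := by
    apply Integrable.mono' (integrable_const (1:ℝ)) hmeas.aestronglyMeasurable
    filter_upwards [ae_restrict_mem hIoc] with x hx
    have h1 := (hbound x hx).1
    have h2 := (hbound x hx).2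
    rw [Real.norm_eq_abs, abs_le]
    constructor <;> linarith
  have hf_int : Integrable (fun x => g x - 1/2) μ :=
    hint.sub (integrable_const _)
  have hf_nn : 0 ≤ᵐ[μ] (fun x => g x - 1/2) := by
    filter_upwards [ae_restrict_mem hIoc] with x hx
    have := (hbound x hx).1
    simp only [Pi.zero_apply]
    linarith
  -- layer cake
  have layer : ENNReal.ofReal (∫ x, (g x - 1/2) ∂μ)
      = ∫⁻ t in Set.Ioi (0:ℝ), μ {a | t < g a - 1/2} := by
    rw [ofReal_integral_eq_lintegral_ofReal hf_int hf_nn]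
    exact lintegral_eq_lintegral_meas_lt μ hf_nn
      ((hmeas.sub measurable_const).aemeasurable)
  -- substitution for the target integral
  have sub1 : (∫ x in ε..(1/2:ℝ), (x - ε)/(1 + 2*x))
      = ∫ t in (0:ℝ)..c, (1/2 - t - ε)/(1 + 2*(1/2 - t)) := by
    have := intervalIntegral.integral_comp_sub_left (a := (0:ℝ)) (b := c)
      (fun x => (x - ε)/(1 + 2*x)) (1/2)
    simp only [hc] at this ⊢
    rw [this]
    norm_num
  set φ : ℝ → ℝ := fun t => (1/2 - t - ε)/(1 + 2*(1/2 - t)) with hφ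
  have φcont : ContinuousOn φ (Set.Icc 0 c) := by
    apply ContinuousOn.div
    · fun_prop
    · fun_prop
    · intro t ht
      have h2 := ht.2
      simp only [hc] at h2
      intro hcontra
      linarith
  have φint : IntegrableOn φ (Set.Ioc 0 c) :=
    (φcont.integrableOn_Icc).mono_set Set.Ioc_subset_Icc_self
  have φnn : 0 ≤ᵐ[volume.restrict (Set.Ioc 0 c)] φ := by
    filter_upwards [ae_restrict_mem (measurableSet_Ioc : MeasurableSet (Set.Ioc (0:ℝ) c))]
      with t ht
    have h1 : t ≤ c := ht.2
    simp only [hc] at h1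
    have h2 : (0:ℝ) < 1 + 2*(1/2 - t) := by linarith
    apply div_nonneg _ h2.le
    linarith
  -- pointwise comparison
  have ptwise : ∀ t ∈ Set.Ioc (0:ℝ) c,
      ENNReal.ofReal (φ t) ≤ μ {a | t < g a - 1/2} := by
    intro t ht
    rcases eq_or_lt_of_le ht.2 with heq | hlt
    · have hnum : 1/2 - t - ε = 0 := by rw [heq, hc]; ring
      have : φ t = 0 := by simp only [hφ, hnum, zero_div]
      rw [this]
      simp
    · set δ := 1/2 - t with hδ
      have hδ1 : ε < δ := by simp only [hδ]; simp only [hc] at hlt; linarith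
      have hδ2 : δ ≤ 1/2 := by simp only [hδ]; linarith [ht.1]
      have hl := (hlevel δ hδ1 hδ2).le
      have hseteq : {a | t < g a - 1/2} ∩ Set.Ioc 0 h
          = {x ∈ Set.Ioc 0 h | 1 - δ < g x} := by
        ext x
        simp only [Set.mem_inter_iff, Set.mem_setOf_eq, Set.mem_sep_iff, hδ]
        constructor
        · rintro ⟨h1, h2⟩; exact ⟨h2, by linarith⟩
        · rintro ⟨h1, h2⟩; exact ⟨by linarith, h1⟩
      have hms : MeasurableSet {a : ℝ | t < g a - 1/2} :=
        measurableSet_lt measurable_const (hmeas.sub measurable_const)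
      rw [hμ, Measure.restrict_apply hms, hseteq]
      have : φ t = (δ - ε)/(1 + 2*δ) := by simp only [hφ, hδ]
      rw [this]
      exact hl
  -- chain of inequalities in ℝ≥0∞
  have key : ENNReal.ofReal (∫ t in Set.Ioc (0:ℝ) c, φ t)
      ≤ ∫⁻ t in Set.Ioi (0:ℝ), μ {a | t < g a - 1/2} := by
    rw [ofReal_integral_eq_lintegral_ofReal φint φnn]
    calc ∫⁻ t in Set.Ioc (0:ℝ) c, ENNReal.ofReal (φ t)
        ≤ ∫⁻ t in Set.Ioc (0:ℝ) c, μ {a | t < g a - 1/2} :=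
          setLIntegral_mono' measurableSet_Ioc ptwise
      _ ≤ ∫⁻ t in Set.Ioi (0:ℝ), μ {a | t < g a - 1/2} :=
          lintegral_mono' (Measure.restrict_mono Set.Ioc_subset_Ioi_self le_rfl) le_rfl
  have hreal : (∫ t in Set.Ioc (0:ℝ) c, φ t) ≤ ∫ x, (g x - 1/2) ∂μ := by
    rw [← layer] at key
    have hnn : 0 ≤ ∫ x, (g x - 1/2) ∂μ := integral_nonneg_of_ae hf_nn
    exact (ENNReal.ofReal_le_ofReal_iff hnn).mp key
  -- rewrite target integral
  have htarget : (∫ x in ε..(1/2:ℝ), (x - ε)/(1 + 2*x)) = ∫ t in Set.Ioc (0:ℝ) c, φ t := by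
    rw [sub1, intervalIntegral.integral_of_le hc0.le]
  -- rewrite the LHS
  have hLHS : (∫ x in (0:ℝ)..h, g x) = (∫ x, (g x - 1/2) ∂μ) + h/2 := by
    rw [intervalIntegral.integral_of_le hh.le]
    have : ∫ x, (g x - 1/2) ∂μ = (∫ x, g x ∂μ) - ∫ x, (1/2:ℝ) ∂μ :=
      integral_sub hint (integrable_const _)
    rw [this]
    have : ∫ x, (1/2:ℝ) ∂μ = h/2 := by
      rw [hμ, setIntegral_const, measureReal_def, Real.volume_Ioc]
      rw [ENNReal.toReal_ofReal (by linarith), smul_eq_mul]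
      ring
    rw [this]
    ring
  rw [hLHS, htarget]
  linarith
end

section
/- Greedy two-bin partition with capacities: Let c₁, c₂ ≥ 0 and let items of nonincreasing area v₁ ≥ v₂ ≥ ... ≥ v_m ≥ 0 with each v_i ≤ M be added one by one to whichever of two sets S₁, S₂ currently has the larger remaining free capacity c_j - Vol(S_j). If the total area of all items (including initial contents) satisfies Vol(S₁) + Vol(S₂) + Σv_i ≤ c₁ + c₂ - M, and the initial contents satisfy Vol(S₁) ≤ c₁ and Vol(S₂) ≤ c₂, then at every step both sets satisfy their capacity constraints: Vol(S₁) ≤ c₁ and Vol(S₂) ≤ c₂. -/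
theorem stmt11 (c₁ c₂ M : ℝ) (hc₁ : 0 ≤ c₁) (hc₂ : 0 ≤ c₂)
    (m : ℕ) (v : ℕ → ℝ)
    (hmono : ∀ i j, i ≤ j → j < m → v j ≤ v i)
    (hv0 : ∀ i, i < m → 0 ≤ v i)
    (hvM : ∀ i, i < m → v i ≤ M)
    (A B : ℕ → ℝ)
    (hA0 : A 0 ≤ c₁) (hB0 : B 0 ≤ c₂)
    (hstep : ∀ i, i < m →
      (c₂ - B i ≤ c₁ - A i ∧ A (i+1) = A i + v i ∧ B (i+1) = B i) ∨
      (c₁ - A i ≤ c₂ - B i ∧ B (i+1) = B i + v i ∧ A (i+1) = A i))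
    (htot : A 0 + B 0 + ∑ i ∈ Finset.range m, v i ≤ c₁ + c₂ - M) :
    ∀ i, i ≤ m → A i ≤ c₁ ∧ B i ≤ c₂ := by
  have hsum : ∀ i, i ≤ m → A i + B i = A 0 + B 0 + ∑ j ∈ Finset.range i, v j := by
    intro i
    induction i with
    | zero => simp
    | succ i ih =>
      intro hi
      have hi' : i < m := Nat.lt_of_succ_le hi
      have h := ih (Nat.le_of_lt hi')
      rw [Finset.sum_range_succ]
      rcases hstep i hi' with ⟨_, hA, hB⟩ | ⟨_, hB, hA⟩ <;> rw [hA, hB] <;> linarith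
  have hbound : ∀ i, i ≤ m → A i + B i ≤ c₁ + c₂ - M := by
    intro i hi
    rw [hsum i hi]
    have : ∑ j ∈ Finset.range i, v j ≤ ∑ j ∈ Finset.range m, v j := by
      apply Finset.sum_le_sum_of_subset_of_nonneg
      · exact Finset.range_subset_range.mpr hi
      · intro j hj _
        exact hv0 j (Finset.mem_range.mp hj)
    linarith
  intro i
  induction i with
  | zero => intro; exact ⟨hA0, hB0⟩
  | succ i ih =>
    intro hi
    have hi' : i < m := Nat.lt_of_succ_le hi
    obtain ⟨hAi, hBi⟩ := ih (Nat.le_of_lt hi')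
    have hM := hvM i hi'
    have hb := hbound (i+1) hi
    rcases hstep i hi' with ⟨hcmp, hA, hB⟩ | ⟨hcmp, hB, hA⟩
    · refine ⟨?_, by rw [hB]; exact hBi⟩
      by_contra h
      push_neg at h
      rw [hA] at h hb
      rw [hB] at hb
      linarith
    · refine ⟨by rw [hA]; exact hAi, ?_⟩
      by_contra h
      push_neg at h
      rw [hB] at h hb
      rw [hA] at hb
      linarith
end
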